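/- arXiv:math/0009008 — 5 statements merged into one kernel-verified Lean document; each statement's English description precedes it below -/
import Mathlib

section
/- Let A be a finite-dimensional K-algebra and B a filtered multiplicative K-basis of A (i.e., B is a K-basis such that for all b1, b2 in B either b1*b2 = 0 or b1*b2 ∈ B, and B ∩ rad(A) is a K-basis of rad(A)). Then for every n ≥ 1, B ∩ rad(A)^n is a K-basis of rad(A)^n. -/
/-! The span of `B ∩ rad A ^ n` is always contained in `rad A ^ n`. Conversely, writing
`rad A ^ (n + 1) = rad A ^ n * rad A`, it is spanned by products `b₁ * b₂` with
`b₁ ∈ B ∩ rad A ^ n` and `b₂ ∈ B ∩ rad A`, and each such product is either `0` or lies in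
`B ∩ rad A ^ (n + 1)`; induction on `n` starts from `span B = ⊤ = rad A ^ 0`.
Linear independence is inherited from `B`. -/

/-- The Jacobson radical of a ring, as an ideal. -/
def ringRad (A : Type*) [Ring A] : Ideal A := (⊥ : Ideal A).jacobson

/-- `B` is a filtered multiplicative `K`-basis of the `K`-algebra `A`:
it is a `K`-basis, products of basis elements are `0` or again basis elements,
and `B ∩ rad A` is a `K`-basis of the Jacobson radical `rad A`. -/
def IsFilteredMulBasis (K : Type*) {A : Type*} [Field K] [Ring A] [Algebra K A]
    (B : Set A) : Prop :=
  LinearIndependent K ((↑) : B → A) ∧ Submodule.span K B = ⊤ ∧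
  (∀ b₁ ∈ B, ∀ b₂ ∈ B, b₁ * b₂ = 0 ∨ b₁ * b₂ ∈ B) ∧
  LinearIndependent K ((↑) : ↥(B ∩ (ringRad A : Set A)) → A) ∧
  Submodule.span K (B ∩ (ringRad A : Set A)) = Submodule.restrictScalars K (ringRad A)

open Set Submodule
open scoped Pointwise

section SpanInter

variable {K A : Type*} [CommSemiring K] [Semiring A] [Algebra K A]

theorem span_inter_mul_eq {B : Set A} (hmul : ∀ b₁ ∈ B, ∀ b₂ ∈ B, b₁ * b₂ = 0 ∨ b₁ * b₂ ∈ B)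
    {M N : Submodule K A} (hM : span K (B ∩ M) = M) (hN : span K (B ∩ N) = N) :
    span K (B ∩ ↑(M * N)) = M * N := by
  refine le_antisymm (span_le.2 inter_subset_right) ?_
  calc M * N = span K (B ∩ M) * span K (B ∩ N) := by rw [hM, hN]
    _ = span K ((B ∩ M) * (B ∩ N)) := span_mul_span K _ _
    _ ≤ span K (B ∩ ↑(M * N)) := by
      refine span_le.2 ?_
      rintro _ ⟨b₁, hb₁, b₂, hb₂, rfl⟩
      rcases hmul b₁ hb₁.1 b₂ hb₂.1 with hzero | hmem
      · simp [hzero]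
      · exact subset_span ⟨hmem, Submodule.mul_mem_mul hb₁.2 hb₂.2⟩

end SpanInter

theorem stmt_0_general {K A : Type*} [Field K] [Ring A] [Algebra K A]
    (B : Set A) (hB : IsFilteredMulBasis K B) (n : ℕ) :
    LinearIndependent K ((↑) : ↥(B ∩ ((ringRad A ^ n : Ideal A) : Set A)) → A) ∧
    Submodule.span K (B ∩ ((ringRad A ^ n : Ideal A) : Set A)) =
      Submodule.restrictScalars K (ringRad A ^ n) := by
  obtain ⟨hli, hspan, hmul, -, hrad⟩ := hB
  refine ⟨hli.comp (inclusion inter_subset_left) (inclusion_injective _), ?_⟩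
  induction n with
  | zero => simpa [Submodule.pow_zero, Ideal.one_eq_top] using hspan
  | succ n ih =>
    have hsucc := span_inter_mul_eq (M := (ringRad A ^ n).restrictScalars K)
      (N := (ringRad A).restrictScalars K) hmul ih hrad
    rwa [← Ideal.restrictScalars_mul, Ideal.coe_restrictScalars, ← Submodule.pow_succ] at hsucc

theorem stmt_0 {K A : Type*} [Field K] [Ring A] [Algebra K A] [FiniteDimensional K A]
    (B : Set A) (hB : IsFilteredMulBasis K B) (n : ℕ) (hn : 1 ≤ n) :
    LinearIndependent K ((↑) : ↥(B ∩ ((ringRad A ^ n : Ideal A) : Set A)) → A) ∧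
    Submodule.span K (B ∩ ((ringRad A ^ n : Ideal A) : Set A)) =
      Submodule.restrictScalars K (ringRad A ^ n) :=
  stmt_0_general B hB n
end

section
/- Let A be a finite-dimensional K-algebra with a filtered multiplicative K-basis B. If u, v ∈ B, u ∉ rad(A)^k, v ∉ rad(A)^k, and u - v ∈ rad(A)^k, then u = v. -/
lemma pow_sub_span {K A : Type*} [Field K] [Ring A] [Algebra K A]
    (B : Set A) (hB : IsFilteredMulBasis K B) (k : ℕ) (hk : 1 ≤ k) :
    ∀ x, x ∈ (ringRad A ^ k : Ideal A) →
      x ∈ Submodule.span K (B ∩ ((ringRad A ^ k : Ideal A) : Set A)) := by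
  induction k with
  | zero => omega
  | succ n ih =>
    rcases Nat.lt_or_ge n 1 with hn | hn
    · interval_cases n
      intro x hx
      simp only [zero_add, Submodule.pow_one] at hx ⊢
      rw [hB.2.2.2.2]
      exact hx
    · have ihn := ih hn
      intro x hx
      rw [Submodule.pow_succ] at hx
      refine Submodule.mul_induction_on hx ?_ ?_
      · intro m hm n' hn'
        have hm' : m ∈ Submodule.span K (B ∩ ((ringRad A ^ n : Ideal A) : Set A)) := ihn m hm
        have hn'' : n' ∈ Submodule.span K (B ∩ (ringRad A : Set A)) := by
          rw [hB.2.2.2.2]; exact hn'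
        have hmul : m * n' ∈ Submodule.span K (B ∩ ((ringRad A ^ n : Ideal A) : Set A)) *
            Submodule.span K (B ∩ (ringRad A : Set A)) :=
          Submodule.mul_mem_mul hm' hn''
        rw [Submodule.span_mul_span] at hmul
        refine Submodule.span_le.mpr ?_ hmul
        rintro p hp
        rw [Set.mem_mul] at hp
        obtain ⟨b₁, hb₁, b₂, hb₂, rfl⟩ := hp
        rcases hB.2.2.1 b₁ hb₁.1 b₂ hb₂.1 with h0 | hBmem
        · rw [h0]; exact Submodule.zero_mem _
        · refine Submodule.subset_span ⟨hBmem, ?_⟩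
          rw [Submodule.pow_succ]
          exact Ideal.mul_mem_mul hb₁.2 hb₂.2
      · intro a b ha hb
        exact Submodule.add_mem _ ha hb

theorem stmt_1 {K A : Type*} [Field K] [Ring A] [Algebra K A] [FiniteDimensional K A]
    (B : Set A) (hB : IsFilteredMulBasis K B) (k : ℕ) (u v : A)
    (hu : u ∈ B) (hv : v ∈ B)
    (hu' : u ∉ (ringRad A ^ k : Ideal A)) (hv' : v ∉ (ringRad A ^ k : Ideal A))
    (huv : u - v ∈ (ringRad A ^ k : Ideal A)) : u = v := by
  rcases Nat.eq_zero_or_pos k with rfl | hk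
  · exact absurd (by rw [Submodule.pow_zero, Ideal.one_eq_top]; trivial) hu'
  by_contra hne
  have hspan : u - v ∈ Submodule.span K (B ∩ ((ringRad A ^ k : Ideal A) : Set A)) :=
    pow_sub_span B hB k hk _ huv
  -- u = (u - v) + v ∈ span (B \ {u})
  have hsub : (B ∩ ((ringRad A ^ k : Ideal A) : Set A)) ∪ {v} ⊆ B \ {u} := by
    rintro x (⟨hxB, hxr⟩ | hx)
    · exact ⟨hxB, fun h => hu' (h ▸ hxr)⟩
    · rw [Set.mem_singleton_iff] at hx
      exact hx ▸ ⟨hv, fun h => hne h.symm⟩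
  have humem : u ∈ Submodule.span K (B \ {u}) := by
    have h1 : u - v ∈ Submodule.span K (B \ {u}) :=
      Submodule.span_mono (le_trans Set.subset_union_left hsub) hspan
    have h2 : v ∈ Submodule.span K (B \ {u}) :=
      Submodule.subset_span (hsub (Set.mem_union_right _ rfl))
    have := Submodule.add_mem _ h1 h2
    rwa [sub_add_cancel] at this
  have hnot : u ∉ Submodule.span K (((↑) : B → A) '' {b : B | (b : A) ≠ u}) := by
    have := hB.1.notMem_span_image (x := (⟨u, hu⟩ : B)) (s := {b : B | (b : A) ≠ u})
      (by simp)
    exact this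
  apply hnot
  refine Submodule.span_mono ?_ humem
  rintro x ⟨hxB, hxu⟩
  exact ⟨⟨x, hxB⟩, hxu, rfl⟩
end

section
/- Let K be a field of characteristic p > 0 and let G = ⟨a1⟩ × ⟨a2⟩ × ... × ⟨as⟩ be a finite abelian p-group written as a direct product of cyclic groups with ⟨ai⟩ of order q_i. Then the set B = { (a1 - 1)^{n1} (a2 - 1)^{n2} ⋯ (as - 1)^{ns} : 0 ≤ n_i < q_i } is a filtered multiplicative K-basis of the group algebra KG. -/
open Set Submodule

theorem mem_ringRad_of_isNilpotent {A : Type*} [CommRing A] {y : A} (hy : IsNilpotent y) :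
    y ∈ ringRad A :=
  Ideal.radical_le_jacobson (mem_nilradical.2 hy)

theorem one_notMem_ringRad {A : Type*} [Ring A] [Nontrivial A] : (1 : A) ∉ ringRad A := fun h =>
  bot_ne_top (Ideal.jacobson_eq_top_iff.1 ((Ideal.eq_top_iff_one _).2 h))

theorem Submodule.span_eq_of_subset_of_span_insert_eq_top {K V : Type*} [DivisionRing K]
    [AddCommGroup V] [Module K V] {s : Set V} {v : V} {W : Submodule K V} (hs : s ⊆ W)
    (hv : v ∉ W) (htop : span K (insert v s) = ⊤) : span K s = W := by
  refine le_antisymm (span_le.2 hs) fun w hw => ?_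
  obtain ⟨c, u, hu, rfl⟩ := mem_span_insert.1 (htop ▸ mem_top : w ∈ span K (insert v s))
  obtain rfl : c = 0 := by
    by_contra hc
    have hcv : c • v ∈ W := by simpa using W.sub_mem hw (span_le.2 hs hu)
    exact hv (by simpa [hc] using W.smul_mem c⁻¹ hcv)
  simpa using hu

theorem sub_one_pow_char_pow_eq_zero {R : Type*} [CommRing R] {p : ℕ} [Fact p.Prime] [CharP R p]
    {u : R} {e : ℕ} (hu : u ^ p ^ e = 1) : (u - 1) ^ p ^ e = 0 := by
  rw [sub_pow_char_pow, hu, one_pow, sub_self]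

theorem Algebra.adjoin_range_sub_one {R A ι : Type*} [CommRing R] [Ring A] [Algebra R A]
    (y : ι → A) : adjoin R (range fun i => y i - 1) = adjoin R (range y) := by
  refine le_antisymm (adjoin_le (range_subset_iff.2 fun i => ?_))
    (adjoin_le (range_subset_iff.2 fun i => ?_))
  · exact sub_mem (subset_adjoin (mem_range_self i)) (one_mem _)
  · simpa using add_mem (subset_adjoin (mem_range_self (f := fun i => y i - 1) i)) (one_mem _)

theorem MonoidAlgebra.adjoin_image_of_eq_top {R M : Type*} [CommSemiring R] [CommMonoid M]
    {S : Set M} (hS : Submonoid.closure S = ⊤) : Algebra.adjoin R (of R M '' S) = ⊤ := by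
  rw [image_eq_range, Algebra.adjoin_range_eq_range_aeval, AlgHom.range_eq_top]
  exact mvPolynomial_aeval_of_surjective_of_closure hS

theorem Nat.card_eq_prod_of_existsUnique_prod_pow {G ι : Type*} [CommMonoid G] [Fintype ι]
    {q : ι → ℕ} {a : ι → G}
    (h : ∀ g : G, ∃! n : ι → ℕ, (∀ i, n i < q i) ∧ g = ∏ i, a i ^ n i) :
    Nat.card G = ∏ i, q i := by
  have hbij : Function.Bijective fun n : (∀ i, Fin (q i)) => ∏ i, a i ^ (n i : ℕ) := by
    refine ⟨fun n m hnm => ?_, fun g => ?_⟩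
    · have hnm' := (h _).unique ⟨fun i => (n i).2, hnm.symm⟩ ⟨fun i => (m i).2, rfl⟩
      exact funext fun i => Fin.ext (congrFun hnm' i)
    · obtain ⟨n, ⟨hn, rfl⟩, -⟩ := h g
      exact ⟨fun i => ⟨n i, hn i⟩, rfl⟩
  rw [← Nat.card_eq_of_bijective _ hbij, Nat.card_pi]
  simp

section BoundedMonomials

variable {ι A : Type*} [Fintype ι]

def boundedMonomials [CommMonoid A] (x : ι → A) (q : ι → ℕ) : Set A :=
  {y | ∃ n : ι → ℕ, (∀ i, n i < q i) ∧ y = ∏ i, x i ^ n i}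

section CommMonoidWithZero

variable [CommMonoidWithZero A] {x : ι → A} {q : ι → ℕ}

theorem boundedMonomials_eq_range :
    boundedMonomials x q = range fun n : (∀ i, Fin (q i)) => ∏ i, x i ^ (n i : ℕ) := by
  ext y
  constructor
  · rintro ⟨n, hn, rfl⟩
    exact ⟨fun i => ⟨n i, hn i⟩, rfl⟩
  · rintro ⟨n, rfl⟩
    exact ⟨fun i => n i, fun i => (n i).2, rfl⟩

theorem one_mem_boundedMonomials (hq : ∀ i, 0 < q i) : 1 ∈ boundedMonomials x q :=
  ⟨0, hq, by simp⟩

theorem prod_pow_eq_zero_or_mem_boundedMonomials (hx : ∀ i, x i ^ q i = 0) (n : ι → ℕ) :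
    ∏ i, x i ^ n i = 0 ∨ ∏ i, x i ^ n i ∈ boundedMonomials x q := by
  by_cases hn : ∀ i, n i < q i
  · exact .inr ⟨n, hn, rfl⟩
  · obtain ⟨i, hi⟩ := not_forall.1 hn
    exact .inl (Finset.prod_eq_zero (Finset.mem_univ i) (pow_eq_zero_of_le (not_lt.1 hi) (hx i)))

theorem mul_eq_zero_or_mem_boundedMonomials (hx : ∀ i, x i ^ q i = 0) {y z : A}
    (hy : y ∈ boundedMonomials x q) (hz : z ∈ boundedMonomials x q) :
    y * z = 0 ∨ y * z ∈ boundedMonomials x q := by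
  obtain ⟨n, -, rfl⟩ := hy
  obtain ⟨m, -, rfl⟩ := hz
  simp_rw [← Finset.prod_mul_distrib, ← pow_add]
  exact prod_pow_eq_zero_or_mem_boundedMonomials hx (n + m)

end CommMonoidWithZero

variable {K : Type*} [CommSemiring K] [CommSemiring A] [Algebra K A] {x : ι → A} {q : ι → ℕ}

theorem isNilpotent_of_mem_boundedMonomials (hx : ∀ i, IsNilpotent (x i)) {y : A}
    (hy : y ∈ boundedMonomials x q) (hy₁ : y ≠ 1) : IsNilpotent y := by
  obtain ⟨n, -, rfl⟩ := hy
  obtain ⟨i, hi⟩ : ∃ i, n i ≠ 0 := by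
    by_contra! h
    exact hy₁ (by simp [h])
  classical
  rw [← Finset.mul_prod_erase _ _ (Finset.mem_univ i)]
  exact (Commute.all _ _).isNilpotent_mul_right ((hx i).pow_of_pos hi)

theorem prod_pow_mem_span_boundedMonomials (hx : ∀ i, x i ^ q i = 0) (n : ι → ℕ) :
    ∏ i, x i ^ n i ∈ span K (boundedMonomials x q) := by
  rcases prod_pow_eq_zero_or_mem_boundedMonomials hx n with h | h
  · exact h ▸ zero_mem _
  · exact subset_span h

theorem mul_mem_span_boundedMonomials (hx : ∀ i, x i ^ q i = 0) {y z : A}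
    (hy : y ∈ span K (boundedMonomials x q)) (hz : z ∈ span K (boundedMonomials x q)) :
    y * z ∈ span K (boundedMonomials x q) := by
  refine (span_mul_span K _ _).le.trans (span_le.2 ?_) (mul_mem_mul hy hz)
  rintro _ ⟨_, ⟨n, -, rfl⟩, _, ⟨m, -, rfl⟩, rfl⟩
  simp_rw [← Finset.prod_mul_distrib, ← pow_add]
  exact prod_pow_mem_span_boundedMonomials hx (n + m)

theorem span_boundedMonomials_eq_adjoin (hx : ∀ i, x i ^ q i = 0) (hq : ∀ i, 0 < q i) :
    span K (boundedMonomials x q) = Subalgebra.toSubmodule (Algebra.adjoin K (range x)) := by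
  refine le_antisymm (span_le.2 ?_) ?_
  · rintro _ ⟨n, -, rfl⟩
    exact Subalgebra.prod_mem _ fun i _ => pow_mem (Algebra.subset_adjoin (mem_range_self i)) _
  · let S := (span K (boundedMonomials x q)).toSubalgebra
      (subset_span (one_mem_boundedMonomials hq)) fun _ _ => mul_mem_span_boundedMonomials hx
    suffices Algebra.adjoin K (range x) ≤ S from this
    refine Algebra.adjoin_le (range_subset_iff.2 fun i => ?_)
    classical
    have hxi : ∏ j, x j ^ (Pi.single i 1 : ι → ℕ) j = x i := by simp [Pi.single_apply]
    exact hxi ▸ prod_pow_mem_span_boundedMonomials hx _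

theorem linearIndepOn_boundedMonomials [OrzechProperty K]
    (hspan : span K (boundedMonomials x q) = ⊤) (hcard : ∏ i, q i = Module.finrank K A) :
    LinearIndepOn K id (boundedMonomials x q) := by
  classical
  rw [boundedMonomials_eq_range] at hspan ⊢
  exact (linearIndependent_of_top_le_span_of_card_eq_finrank hspan.ge
    (by simpa using hcard)).linearIndepOn_id

end BoundedMonomials

theorem isFilteredMulBasis_boundedMonomials {ι K A : Type*} [Fintype ι] [Field K] [CommRing A]
    [Algebra K A] {x : ι → A} {q : ι → ℕ} (hx : ∀ i, x i ^ q i = 0) (hq : ∀ i, 0 < q i)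
    (hgen : Algebra.adjoin K (range x) = ⊤) (hcard : ∏ i, q i = Module.finrank K A) :
    IsFilteredMulBasis K (boundedMonomials x q) := by
  have hspan : span K (boundedMonomials x q) = ⊤ := by
    rw [span_boundedMonomials_eq_adjoin hx hq, hgen, Algebra.top_toSubmodule]
  have hli := linearIndepOn_boundedMonomials hspan hcard
  have : Nontrivial A :=
    Module.nontrivial_of_finrank_pos (R := K) (hcard ▸ Finset.prod_pos fun i _ => hq i)
  have hrad : boundedMonomials x q ∩ ringRad A = boundedMonomials x q \ {1} := by
    ext y
    refine and_congr_right fun hy => ⟨fun h h₁ => one_notMem_ringRad (h₁ ▸ h), fun h₁ => ?_⟩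
    exact mem_ringRad_of_isNilpotent
      (isNilpotent_of_mem_boundedMonomials (fun i => ⟨q i, hx i⟩) hy h₁)
  refine ⟨hli, hspan, fun _ hy _ hz => mul_eq_zero_or_mem_boundedMonomials hx hy hz,
    hli.mono inter_subset_left, ?_⟩
  rw [hrad]
  refine span_eq_of_subset_of_span_insert_eq_top (fun y hy => ?_) one_notMem_ringRad ?_
  · exact (hrad.ge hy).2
  · rwa [insert_sdiff_singleton, insert_eq_of_mem (one_mem_boundedMonomials hq)]

theorem stmt_3_general {K : Type*} [Field K] {p : ℕ} [Fact p.Prime] [CharP K p]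
    {G : Type*} [CommGroup G]
    (s : ℕ) (q : Fin s → ℕ) (e : Fin s → ℕ) (hq : ∀ i, q i = p ^ e i)
    (a : Fin s → G) (horder : ∀ i, orderOf (a i) = q i)
    (hdirect : ∀ g : G, ∃! n : Fin s → ℕ, (∀ i, n i < q i) ∧ g = ∏ i, a i ^ n i) :
    IsFilteredMulBasis K
      {x : MonoidAlgebra K G | ∃ n : Fin s → ℕ, (∀ i, n i < q i) ∧
        x = ∏ i, (MonoidAlgebra.of K G (a i) - 1) ^ n i} := by
  have : CharP (MonoidAlgebra K G) p := charP_of_injective_algebraMap (algebraMap K _).injective p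
  have hx : ∀ i, (MonoidAlgebra.of K G (a i) - 1) ^ q i = 0 := fun i => by
    rw [hq]
    refine sub_one_pow_char_pow_eq_zero ?_
    rw [← map_pow, ← hq, ← horder, pow_orderOf_eq_one, map_one]
  have hclosure : Submonoid.closure (range a) = ⊤ := by
    refine eq_top_iff.2 fun g _ => ?_
    obtain ⟨n, ⟨-, rfl⟩, -⟩ := hdirect g
    exact prod_mem fun i _ => pow_mem (Submonoid.subset_closure (mem_range_self i)) _
  refine isFilteredMulBasis_boundedMonomials hx (fun i => hq i ▸ pow_pos (Fact.out : p.Prime).pos _)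
    ?_ ?_
  · rw [Algebra.adjoin_range_sub_one, range_comp', MonoidAlgebra.adjoin_image_of_eq_top hclosure]
  · rw [Module.finrank_eq_nat_card_basis (MonoidAlgebra.basis G K),
      Nat.card_eq_prod_of_existsUnique_prod_pow hdirect]

theorem stmt_3 {K : Type*} [Field K] {p : ℕ} [Fact p.Prime] [CharP K p]
    {G : Type*} [CommGroup G] [Finite G]
    (s : ℕ) (q : Fin s → ℕ) (e : Fin s → ℕ) (hq : ∀ i, q i = p ^ e i)
    (a : Fin s → G) (horder : ∀ i, orderOf (a i) = q i)
    (hdirect : ∀ g : G, ∃! n : Fin s → ℕ, (∀ i, n i < q i) ∧ g = ∏ i, a i ^ n i) :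
    IsFilteredMulBasis K
      {x : MonoidAlgebra K G | ∃ n : Fin s → ℕ, (∀ i, n i < q i) ∧
        x = ∏ i, (MonoidAlgebra.of K G (a i) - 1) ^ n i} :=
  stmt_3_general s q e hq a horder hdirect
end

section
/- Let K be a field of characteristic 2 and G the dihedral group ⟨a, b | a^{2^n} = b² = 1, bab⁻¹ = a⁻¹⟩ of order 2^{n+1}, n ≥ 2. With u = a + b in KG, for every i ≥ 1 one has u^i ≡ (1+a)^{2i-1} + (1+a)^{2i-2}(1+b) + β₁(1+a)^{2i} + β₂(1+a)^{2i-1}(1+b) (mod I_K(G)^{2i+1}), where β₁ = β₂ = 1 if i is even and β₁ = β₂ = 0 if i is odd. -/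
/-- The augmentation ideal of a group algebra. -/
noncomputable def augIdeal (K G : Type*) [Field K] [Group G] : Ideal (MonoidAlgebra K G) :=
  RingHom.ker (MonoidAlgebra.lift K K G 1).toRingHom

/-!
Write `u = a + b` and `x = 1 + a`. The relations `b² = 1`, `ba = a⁻¹b` give `u² = (a + a⁻¹) u`,
and in characteristic 2 `a + a⁻¹ = a⁻¹ x²`, so `u ^ (j + 1) = x ^ (2j) a⁻ʲ u`. Since
`a⁻¹ = 1 + a⁻¹ x` and `a⁻¹ x ≡ x` modulo `I²`, the binomial expansion gives `a⁻ʲ ≡ 1 + j x`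
modulo `I²`; the error term therefore lies in `I ^ (2j) · I² · I`, and expanding
`x ^ (2j) (1 + j x) (x + y)` with `y = 1 + b` gives the stated normal form.
-/

theorem pow_succ_eq_pow_mul_of_mul_self_eq {M : Type*} [Monoid M] {u z : M} (h : u * u = z * u)
    (m : ℕ) : u ^ (m + 1) = z ^ m * u := by
  induction m with
  | zero => simp
  | succ m ih => rw [pow_succ, ih, mul_assoc, h, ← mul_assoc, ← pow_succ]

theorem one_add_pow_sub_one_add_nsmul_mem_sq {A : Type*} [Ring A] {I : Ideal A} {t : A}
    (ht : t ∈ I) (m : ℕ) : (1 + t) ^ m - (1 + m • t) ∈ I ^ 2 := by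
  induction m with
  | zero => simp
  | succ m ih =>
    have hsplit : (1 + t) ^ (m + 1) - (1 + (m + 1) • t)
        = (1 + t) * ((1 + t) ^ m - (1 + m • t)) + m • t ^ 2 := by
      simp only [pow_succ', succ_nsmul, mul_sub, mul_add, add_mul, mul_one, one_mul, mul_smul_comm,
        smul_add, pow_zero]
      abel
    rw [hsplit]
    exact add_mem ((I ^ 2).mul_mem_left _ ih) (nsmul_mem (Ideal.pow_mem_pow ht 2) m)

section Dihedral

variable {A : Type*} [Ring A] {α β γ : A}

theorem add_mul_self_eq_of_dihedral (hγα : γ * α = 1) (hβ : β * β = 1) (hβα : β * α = γ * β) :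
    (α + β) * (α + β) = (α + γ) * (α + β) := by
  simp only [add_mul, mul_add, hγα, hβ, hβα]
  abel

variable [CharP A 2]

theorem add_eq_one_add_add_one_add (α β : A) : α + β = (1 + α) + (1 + β) := by
  rw [add_add_add_comm, CharTwo.add_self_eq_zero, zero_add]

theorem add_eq_mul_one_add_sq (hγα : γ * α = 1) : α + γ = γ * (1 + α) ^ 2 := by
  have h : γ * (1 + α) ^ 2 = γ + (γ * α + γ * α) + γ * α * α := by noncomm_ring
  rw [h, CharTwo.add_self_eq_zero, hγα, one_mul, add_zero, add_comm]

theorem pow_succ_eq_of_dihedral (hγα : γ * α = 1) (hαγ : α * γ = 1) (hβ : β * β = 1)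
    (hβα : β * α = γ * β) (j : ℕ) :
    (α + β) ^ (j + 1) = (1 + α) ^ (2 * j) * γ ^ j * (α + β) := by
  have hcomm : Commute γ ((1 + α) ^ 2) := by
    refine Commute.pow_right ?_ 2
    simp only [Commute, SemiconjBy, mul_add, add_mul, hγα, hαγ, mul_one, one_mul]
  rw [pow_succ_eq_pow_mul_of_mul_self_eq (add_mul_self_eq_of_dihedral hγα hβ hβα),
    add_eq_mul_one_add_sq hγα, hcomm.mul_pow, pow_mul, (hcomm.pow_pow j j).eq]

theorem pow_sub_one_add_nsmul_mem_sq {I : Ideal A} (hγα : γ * α = 1) (hx : 1 + α ∈ I) (m : ℕ) :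
    γ ^ m - (1 + m • (1 + α)) ∈ I ^ 2 := by
  have hγ : 1 + γ * (1 + α) = γ := by
    rw [mul_add, mul_one, hγα, add_comm γ, ← add_assoc, CharTwo.add_self_eq_zero, zero_add]
  have hdiff : γ * (1 + α) - (1 + α) = γ * (1 + α) ^ 2 := by
    rw [← add_eq_mul_one_add_sq hγα, CharTwo.sub_eq_add, mul_add, mul_one, hγα, add_assoc,
      ← add_assoc 1 1, CharTwo.add_self_eq_zero, zero_add, add_comm]
  have h := one_add_pow_sub_one_add_nsmul_mem_sq (I.mul_mem_left γ hx) m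
  rw [hγ] at h
  have hsplit : γ ^ m - (1 + m • (1 + α))
      = (γ ^ m - (1 + m • (γ * (1 + α)))) + m • (γ * (1 + α) - (1 + α)) := by
    rw [smul_sub]; abel
  rw [hsplit, hdiff]
  exact add_mem h (nsmul_mem ((I ^ 2).mul_mem_left γ (Ideal.pow_mem_pow hx 2)) m)

theorem dihedral_pow_succ_sub_mem {I : Ideal A} (hγα : γ * α = 1) (hαγ : α * γ = 1)
    (hβ : β * β = 1) (hβα : β * α = γ * β) (hx : 1 + α ∈ I) (hy : 1 + β ∈ I) (j : ℕ) :
    (α + β) ^ (j + 1) - (1 + α) ^ (2 * j) * (1 + j • (1 + α)) * (α + β) ∈ I ^ (2 * j + 3) := by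
  have hu : α + β ∈ I := add_eq_one_add_add_one_add α β ▸ add_mem hx hy
  rw [pow_succ_eq_of_dihedral hγα hαγ hβ hβα, ← sub_mul, ← mul_sub, Submodule.pow_succ,
    Submodule.pow_add _ two_ne_zero]
  exact Ideal.mul_mem_mul (Ideal.mul_mem_mul (Ideal.pow_mem_pow hx _)
    (pow_sub_one_add_nsmul_mem_sq hγα hx j)) hu

theorem one_add_pow_mul_one_add_nsmul_mul_add_eq (α β : A) (j : ℕ) :
    (1 + α) ^ (2 * j) * (1 + j • (1 + α)) * (α + β) =
      (1 + α) ^ (2 * j + 1) + (1 + α) ^ (2 * j) * (1 + β) +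
        if Even (j + 1) then (1 + α) ^ (2 * j + 2) + (1 + α) ^ (2 * j + 1) * (1 + β) else 0 := by
  rw [add_eq_one_add_add_one_add α β, nsmul_eq_mul, CharTwo.natCast_eq_ite]
  simp only [Nat.even_add_one]
  split_ifs <;> simp only [pow_succ] <;> noncomm_ring

end Dihedral

theorem one_add_of_mem_augIdeal {K G : Type*} [Field K] [CharP K 2] [Group G] (g : G) :
    1 + MonoidAlgebra.of K G g ∈ augIdeal K G := by
  simp [augIdeal, RingHom.mem_ker, CharTwo.add_self_eq_zero]

theorem stmt_14_general {K : Type*} [Field K] [CharP K 2]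
    {G : Type*} [Group G] (a b : G)
    (hb : b ^ 2 = 1) (hconj : b * a * b⁻¹ = a⁻¹)
    (i : ℕ) (hi : 1 ≤ i) :
    (MonoidAlgebra.of K G a + MonoidAlgebra.of K G b) ^ i -
      ((1 + MonoidAlgebra.of K G a) ^ (2 * i - 1) +
        (1 + MonoidAlgebra.of K G a) ^ (2 * i - 2) * (1 + MonoidAlgebra.of K G b) +
        (if Even i then
          (1 + MonoidAlgebra.of K G a) ^ (2 * i) +
          (1 + MonoidAlgebra.of K G a) ^ (2 * i - 1) * (1 + MonoidAlgebra.of K G b)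
        else 0)) ∈ augIdeal K G ^ (2 * i + 1) := by
  have : CharP (MonoidAlgebra K G) 2 := charP_of_injective_algebraMap' K 2
  set of := MonoidAlgebra.of K G
  have hβα : of b * of a = of a⁻¹ * of b := by
    rw [← map_mul, ← map_mul, ← hconj, inv_mul_cancel_right]
  have hβ : of b * of b = 1 := by rw [← map_mul, ← pow_two, hb, map_one]
  obtain ⟨j, rfl⟩ := Nat.exists_eq_add_of_le' hi
  have key := dihedral_pow_succ_sub_mem (map_mul_eq_one of (inv_mul_cancel a))
    (map_mul_eq_one of (mul_inv_cancel a)) hβ hβα (one_add_of_mem_augIdeal a)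
    (one_add_of_mem_augIdeal b) j
  rw [one_add_pow_mul_one_add_nsmul_mul_add_eq] at key
  rwa [show 2 * (j + 1) + 1 = 2 * j + 3 by ring, show 2 * (j + 1) - 1 = 2 * j + 1 by omega,
    show 2 * (j + 1) - 2 = 2 * j by omega, show 2 * (j + 1) = 2 * j + 2 by ring]

theorem stmt_14 {K : Type*} [Field K] [CharP K 2]
    {G : Type*} [Group G] (n : ℕ) (hn : 2 ≤ n) (a b : G)
    (ha : a ^ 2 ^ n = 1) (hb : b ^ 2 = 1) (hconj : b * a * b⁻¹ = a⁻¹)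
    (hgen : Subgroup.closure {a, b} = (⊤ : Subgroup G))
    (hcard : Nat.card G = 2 ^ (n + 1)) (i : ℕ) (hi : 1 ≤ i) :
    (MonoidAlgebra.of K G a + MonoidAlgebra.of K G b) ^ i -
      ((1 + MonoidAlgebra.of K G a) ^ (2 * i - 1) +
        (1 + MonoidAlgebra.of K G a) ^ (2 * i - 2) * (1 + MonoidAlgebra.of K G b) +
        (if Even i then
          (1 + MonoidAlgebra.of K G a) ^ (2 * i) +
          (1 + MonoidAlgebra.of K G a) ^ (2 * i - 1) * (1 + MonoidAlgebra.of K G b)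
        else 0)) ∈ augIdeal K G ^ (2 * i + 1) :=
  stmt_14_general a b hb hconj i hi
end

section
/- Let K be a field of characteristic 2, n ≥ 3, and G = ⟨a, b | a^{2^n} = b² = 1, b a b⁻¹ = a^{-1+2^{n-1}}⟩ the semidihedral group of order 2^{n+1}. Set u = a + b, v = 1 + b in KG. Then u² - uvu = (1+a)^{2^{n-1}}(1+b) + (1+a)^{2^{n-1}} ≠ 0, while u² ≡ uvu (mod I_K(G)^{2^{n-1}}) and u², uvu ∉ I_K(G)⁴. -/
open MonoidAlgebra Pointwise

section AugmentationIdeal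

variable {K G : Type*} [Field K] [Group G]

theorem mem_augIdeal_iff {x : MonoidAlgebra K G} : x ∈ augIdeal K G ↔ lift K K G 1 x = 0 :=
  Iff.rfl

instance : (augIdeal K G).IsTwoSided := inferInstanceAs (RingHom.ker _).IsTwoSided

theorem mapDomainRingHom_of {H : Type*} [Group H] (π : G →* H) (g : G) :
    mapDomainRingHom K π (of K G g) = of K H (π g) := by
  simp [of_apply, mapDomain_single]

theorem lift_one_mapDomainRingHom {H : Type*} [Group H] (π : G →* H) (x : MonoidAlgebra K G) :
    lift K K H 1 (mapDomainRingHom K π x) = lift K K G 1 x := by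
  induction x using induction_linear with
  | zero => simp
  | add y z hy hz => simp only [map_add, hy, hz]
  | single g c => simp [mapDomain_single, lift_single]

theorem of_sub_one_mem_augIdeal (g : G) : of K G g - 1 ∈ augIdeal K G := by
  simp [mem_augIdeal_iff]

theorem mapDomainRingHom_mem_augIdeal_pow {H : Type*} [Group H] (π : G →* H) {k : ℕ}
    {x : MonoidAlgebra K G} (hx : x ∈ augIdeal K G ^ k) :
    mapDomainRingHom K π x ∈ augIdeal K H ^ k := by
  induction k generalizing x with
  | zero => rw [Submodule.pow_zero, Ideal.one_eq_top]; exact Submodule.mem_top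
  | succ k ih =>
    rw [Submodule.pow_succ] at hx ⊢
    refine Submodule.mul_induction_on hx (fun y hy z hz => ?_) fun y z hy hz => ?_
    · rw [map_mul]
      exact Submodule.mul_mem_mul (ih hy)
        (mem_augIdeal_iff.mpr ((lift_one_mapDomainRingHom π z).trans hz))
    · rw [map_add]
      exact add_mem hy hz

theorem augIdeal_le_span_of_sub_one :
    (augIdeal K G).restrictScalars K ≤ Submodule.span K (Set.range fun g => of K G g - 1) := by
  intro x hx
  have hsub : ∀ y : MonoidAlgebra K G,
      y - lift K K G 1 y • 1 ∈ Submodule.span K (Set.range fun g => of K G g - 1) := by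
    intro y
    induction y using induction_linear with
    | zero => simp
    | add y z hy hz => simpa [add_smul, add_sub_add_comm] using add_mem hy hz
    | single g c =>
      have hg : of K G g - 1 ∈ Submodule.span K (Set.range fun g => of K G g - 1) :=
        Submodule.subset_span ⟨g, rfl⟩
      simpa [lift_single, smul_sub, of_apply] using Submodule.smul_mem _ c hg
  simpa [mem_augIdeal_iff.mp hx] using hsub x

theorem augIdeal_pow_le_span {k : ℕ} (hk : k ≠ 0) :
    (augIdeal K G ^ k).restrictScalars K ≤
      Submodule.span K ((Set.range fun g => of K G g - 1) ^ k) := by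
  rw [Submodule.restrictScalars_pow hk, ← Submodule.span_pow]
  exact pow_le_pow_left' augIdeal_le_span_of_sub_one k

end AugmentationIdeal

theorem sq_sub_mul_one_add_mul_eq {R : Type*} [Ring R] [CharP R 2] {x y : R} (m : ℕ)
    (hy : y * y = 1) (hxyx : x * y * x = x ^ 2 ^ m * y) :
    (x + y) ^ 2 - (x + y) * (1 + y) * (x + y) = (1 + x) ^ 2 ^ m * y := by
  calc (x + y) ^ 2 - (x + y) * (1 + y) * (x + y) = -((x + y) * y * (x + y)) := by noncomm_ring
    _ = x * y * x + x * (y * y) + (y * y) * x + (y * y) * y := by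
      rw [CharTwo.neg_eq]; noncomm_ring
    _ = (1 + x ^ 2 ^ m) * y + (x + x) := by rw [hxyx, hy]; noncomm_ring
    _ = (1 + x) ^ 2 ^ m * y := by
      rw [CharTwo.add_self_eq_zero, add_zero, add_pow_char_pow_of_commute 2 m (Commute.one_left x),
        one_pow]

section DihedralFunctional

open DihedralGroup

def dihedralWeight (h : DihedralGroup 4) : ZMod 2 := if h = r 0 ∨ h = r 1 then 1 else 0

variable (K : Type*) [Field K] [CharP K 2]

noncomputable def dihedralFunctional : MonoidAlgebra K (DihedralGroup 4) →ₗ[K] K :=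
  Finsupp.linearCombination K (ZMod.castHom (dvd_refl 2) K ∘ dihedralWeight) ∘ₗ
    (coeffLinearEquiv K).toLinearMap

variable {K}

theorem dihedralFunctional_of (h : DihedralGroup 4) :
    dihedralFunctional K (of K _ h) = ZMod.castHom (dvd_refl 2) K (dihedralWeight h) := by
  simp [dihedralFunctional, of_apply]

theorem dihedralFunctional_one :
    dihedralFunctional K 1 = ZMod.castHom (dvd_refl 2) K (dihedralWeight 1) := by
  rw [← dihedralFunctional_of, map_one (of K (DihedralGroup 4))]

theorem dihedralFunctional_eq_zero_of_mem_augIdeal_pow_four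
    {y : MonoidAlgebra K (DihedralGroup 4)} (hy : y ∈ augIdeal K (DihedralGroup 4) ^ 4) :
    dihedralFunctional K y = 0 := by
  suffices (Set.range fun h => of K (DihedralGroup 4) h - 1) ^ 4 ⊆
      LinearMap.ker (dihedralFunctional K) from
    Submodule.span_le.mpr this (augIdeal_pow_le_span four_ne_zero hy)
  simp only [pow_succ, pow_zero, one_mul]
  rintro _ ⟨_, ⟨_, ⟨_, ⟨h₁, rfl⟩, _, ⟨h₂, rfl⟩, rfl⟩, _, ⟨h₃, rfl⟩, rfl⟩, _, ⟨h₄, rfl⟩, rfl⟩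
  simp only [SetLike.mem_coe, LinearMap.mem_ker, sub_mul, mul_sub, one_mul, mul_one, ← map_mul,
    map_sub, dihedralFunctional_of, dihedralFunctional_one]
  simp only [← map_sub]
  refine (congrArg (ZMod.castHom (dvd_refl 2) K) ?_).trans (map_zero _)
  revert h₁ h₂ h₃ h₄
  decide

theorem dihedralFunctional_sq :
    dihedralFunctional K ((of K _ (r 1) + of K _ (sr 0)) ^ 2) = 1 := by
  simp only [sq, add_mul, mul_add, ← map_mul, map_add, dihedralFunctional_of]
  simp only [← map_add]
  exact (congrArg (ZMod.castHom (dvd_refl 2) K) (by decide)).trans (map_one _)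

theorem dihedralFunctional_mul_one_add_mul :
    dihedralFunctional K
      ((of K _ (r 1) + of K _ (sr 0)) * (1 + of K _ (sr 0)) * (of K _ (r 1) + of K _ (sr 0))) =
        1 := by
  simp only [add_mul, mul_add, mul_one, ← map_mul, map_add, dihedralFunctional_of]
  simp only [← map_add]
  exact (congrArg (ZMod.castHom (dvd_refl 2) K) (by decide)).trans (map_one _)

theorem notMem_augIdeal_pow_four_of_dihedralFunctional_eq_one {G : Type*} [Group G]
    (π : G →* DihedralGroup 4) {x : MonoidAlgebra K G}
    (hx : dihedralFunctional K (mapDomainRingHom K π x) = 1) : x ∉ augIdeal K G ^ 4 :=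
  fun hmem => one_ne_zero <| hx.symm.trans <|
    dihedralFunctional_eq_zero_of_mem_augIdeal_pow_four (mapDomainRingHom_mem_augIdeal_pow π hmem)

end DihedralFunctional

section Generation

open Subgroup

variable {G : Type*} [Group G]

theorem card_closure_pair_le {a b : G} (hb : b ^ 2 ∈ zpowers a)
    (hconj : b * a * b⁻¹ ∈ zpowers a) :
    Nat.card (closure {a, b}) ≤ 2 * orderOf a := by
  set Z := zpowers a
  have hnorm : ∀ z ∈ Z, b * z * b⁻¹ ∈ Z := by
    rintro _ ⟨k, rfl⟩
    simpa only [conj_zpow] using zpow_mem hconj k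
  have hb' : b * b ∈ Z := by rwa [← sq]
  have hcover : (closure {a, b} : Set G) ⊆ Z ∪ (· * b) '' Z := by
    intro g hg
    suffices g ∈ Z ∨ g * b⁻¹ ∈ Z by
      rcases this with h | h
      · exact Or.inl h
      · exact Or.inr ⟨g * b⁻¹, h, inv_mul_cancel_right g b⟩
    induction hg using closure_induction'' with
    | mem x hx =>
      rcases hx with rfl | rfl
      · exact Or.inl (mem_zpowers x)
      · exact Or.inr (by simp)
    | inv_mem x hx =>
      rcases hx with rfl | rfl
      · exact Or.inl (inv_mem (mem_zpowers x))
      · exact Or.inr (by simpa [mul_inv_rev] using inv_mem hb')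
    | one => exact Or.inl (one_mem Z)
    | mul x y _ _ hx hy =>
      rcases hx with hx | hx <;> rcases hy with hy | hy
      · exact Or.inl (mul_mem hx hy)
      · exact Or.inr (by simpa [mul_assoc] using mul_mem hx hy)
      · exact Or.inr (by simpa [mul_assoc] using mul_mem hx (hnorm y hy))
      · exact Or.inl (by simpa [mul_assoc] using mul_mem (mul_mem hx (hnorm _ hy)) hb')
  by_cases hfin : (Z : Set G).Finite
  · calc Nat.card (closure {a, b}) = (closure {a, b} : Set G).ncard := Nat.card_coe_set_eq _
      _ ≤ (Z ∪ (· * b) '' Z : Set G).ncard :=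
        Set.ncard_le_ncard hcover (hfin.union (hfin.image _))
      _ ≤ (Z : Set G).ncard + ((· * b) '' Z : Set G).ncard := Set.ncard_union_le _ _
      _ ≤ (Z : Set G).ncard + (Z : Set G).ncard :=
        Nat.add_le_add_left (Set.ncard_image_le hfin) _
      _ = 2 * orderOf a := by
        rw [← Nat.card_coe_set_eq, SetLike.coe_sort_coe, Nat.card_zpowers, two_mul]
  · have : Infinite (closure {a, b}) := Set.infinite_coe_iff.mpr fun h => hfin (h.subset
      (zpowers_le.mpr (subset_closure (Set.mem_insert a {b}))))
    rw [Nat.card_eq_zero_of_infinite]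
    exact Nat.zero_le _

theorem exists_monoidHom_of_card_closure_le {H : Type*} [Group H] [Finite G] [Finite H]
    {a b : G} {a' b' : H} (hgen : closure {a, b} = ⊤)
    (hcard : Nat.card (closure {((a, a') : G × H), (b, b')}) ≤ Nat.card G) :
    ∃ f : G →* H, f a = a' ∧ f b = b' := by
  set Γ := closure {((a, a') : G × H), (b, b')}
  set p : Γ →* G := (MonoidHom.fst G H).comp Γ.subtype
  have hp : Function.Surjective p := by
    rw [← MonoidHom.range_eq_top, MonoidHom.range_comp, range_subtype, MonoidHom.map_closure,
      Set.image_pair]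
    exact hgen
  let e := MulEquiv.ofBijective p (hp.bijective_of_nat_card_le hcard)
  have he (x : G × H) (hx : x ∈ Γ) : e.symm x.1 = ⟨x, hx⟩ := e.symm_apply_apply ⟨x, hx⟩
  refine ⟨(MonoidHom.snd G H).comp (Γ.subtype.comp e.symm.toMonoidHom), ?_, ?_⟩
  · simp [he (a, a') (subset_closure (Set.mem_insert _ _))]
  · simp [he (b, b') (subset_closure (Set.mem_insert_of_mem _ rfl))]

end Generation

section Semidihedral

open Subgroup DihedralGroup

variable {G : Type*} [Group G] {n : ℕ} {a b : G}

theorem conj_mem_zpowers_of_semidihedral (hconj : b * a * b⁻¹ = a ^ 2 ^ (n - 1) * a⁻¹) :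
    b * a * b⁻¹ ∈ zpowers a := by
  rw [hconj]
  exact mul_mem (pow_mem (mem_zpowers a) _) (inv_mem (mem_zpowers a))

theorem two_pow_le_orderOf_of_semidihedral (hb : b ^ 2 = 1)
    (hconj : b * a * b⁻¹ = a ^ 2 ^ (n - 1) * a⁻¹) (hgen : closure {a, b} = ⊤)
    (hcard : Nat.card G = 2 ^ (n + 1)) : 2 ^ n ≤ orderOf a := by
  have := card_closure_pair_le (hb ▸ one_mem _) (conj_mem_zpowers_of_semidihedral hconj)
  rw [hgen, card_top, hcard, pow_succ] at this
  omega

theorem DihedralGroup.r_one_pow_eq_one_of_dvd {m k : ℕ} (h : m ∣ k) :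
    (r 1 : DihedralGroup m) ^ k = 1 :=
  orderOf_dvd_iff_pow_eq_one.mp (by rwa [orderOf_r_one])

theorem DihedralGroup.sr_mul_r_mul_inv_eq_pow_mul_inv (hn : 3 ≤ n) :
    sr (0 : ZMod 4) * r 1 * (sr 0)⁻¹ = r 1 ^ 2 ^ (n - 1) * (r 1)⁻¹ := by
  have h4 : (4 : ℕ) ∣ 2 ^ (n - 1) := by
    rw [show (4 : ℕ) = 2 ^ 2 by norm_num]; exact pow_dvd_pow 2 (by omega)
  rw [r_one_pow_eq_one_of_dvd h4, one_mul]
  simp [sr_mul_r, sr_mul_sr, inv_sr, inv_r]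

theorem exists_monoidHom_dihedralGroup_four_of_semidihedral (hn : 3 ≤ n) (ha : a ^ 2 ^ n = 1)
    (hb : b ^ 2 = 1) (hconj : b * a * b⁻¹ = a ^ 2 ^ (n - 1) * a⁻¹)
    (hgen : closure {a, b} = ⊤) (hcard : Nat.card G = 2 ^ (n + 1)) :
    ∃ π : G →* DihedralGroup 4, π a = r 1 ∧ π b = sr 0 := by
  have : Finite G := Nat.finite_of_card_ne_zero (by simp [hcard])
  refine exists_monoidHom_of_card_closure_le hgen ?_
  have hr : (r 1 : DihedralGroup 4) ^ 2 ^ n = 1 :=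
    r_one_pow_eq_one_of_dvd (pow_dvd_pow 2 (by omega : 2 ≤ n) : 2 ^ 2 ∣ 2 ^ n)
  have hsq : (b, sr (0 : ZMod 4)) ^ 2 ∈ zpowers (a, r 1) := by
    rw [Prod.pow_mk, hb, sq, sr_mul_self]; exact one_mem _
  have hconj' : (b, sr (0 : ZMod 4)) * (a, r 1) * (b, sr 0)⁻¹ ∈ zpowers (a, r 1) :=
    conj_mem_zpowers_of_semidihedral (n := n)
      (Prod.ext hconj (sr_mul_r_mul_inv_eq_pow_mul_inv hn))
  calc Nat.card (closure {(a, r 1), (b, sr 0)}) ≤ 2 * orderOf (a, (r 1 : DihedralGroup 4)) :=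
        card_closure_pair_le hsq hconj'
    _ ≤ 2 * 2 ^ n := Nat.mul_le_mul_left 2 (orderOf_le_of_pow_eq_one (by positivity)
        (Prod.ext ha hr))
    _ = Nat.card G := by rw [hcard, pow_succ, mul_comm]

theorem mul_mul_eq_of_semidihedral (hconj : b * a * b⁻¹ = a ^ 2 ^ (n - 1) * a⁻¹) :
    a * b * a = a ^ 2 ^ (n - 1) * b := by
  have hba : b * a = a ^ 2 ^ (n - 1) * a⁻¹ * b := by rw [← hconj]; group
  rw [mul_assoc, hba]
  group

end Semidihedral

theorem stmt_17 {K : Type*} [Field K] [CharP K 2]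
    {G : Type*} [Group G] (n : ℕ) (hn : 3 ≤ n) (a b : G)
    (ha : a ^ 2 ^ n = 1) (hb : b ^ 2 = 1)
    (hconj : b * a * b⁻¹ = a ^ 2 ^ (n - 1) * a⁻¹)
    (hgen : Subgroup.closure {a, b} = (⊤ : Subgroup G))
    (hcard : Nat.card G = 2 ^ (n + 1)) :
    ∀ A B u v : MonoidAlgebra K G,
      A = MonoidAlgebra.of K G a → B = MonoidAlgebra.of K G b →
      u = A + B → v = 1 + B →
      u ^ 2 - u * v * u = (1 + A) ^ 2 ^ (n - 1) * (1 + B) + (1 + A) ^ 2 ^ (n - 1) ∧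
      u ^ 2 - u * v * u ≠ 0 ∧
      u ^ 2 - u * v * u ∈ augIdeal K G ^ 2 ^ (n - 1) ∧
      u ^ 2 ∉ augIdeal K G ^ 4 ∧ u * v * u ∉ augIdeal K G ^ 4 := by
  rintro A B u v rfl rfl rfl rfl
  have : CharP (MonoidAlgebra K G) 2 :=
    charP_of_injective_algebraMap (algebraMap K (MonoidAlgebra K G)).injective 2
  have hbb : of K G b * of K G b = 1 := by rw [← map_mul, ← sq, hb, map_one]
  have hkey := sq_sub_mul_one_add_mul_eq (n - 1) hbb
    (by rw [← map_mul, ← map_mul, mul_mul_eq_of_semidihedral hconj, map_mul, map_pow])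
  have hpow : a ^ 2 ^ (n - 1) ≠ 1 := pow_ne_one_of_lt_orderOf (by positivity)
    ((Nat.pow_lt_pow_right one_lt_two (by omega)).trans_le
      (two_pow_le_orderOf_of_semidihedral hb hconj hgen hcard))
  have h1X : 1 + of K G a = of K G a - 1 := by rw [CharTwo.sub_eq_add, add_comm]
  obtain ⟨π, hπa, hπb⟩ :=
    exists_monoidHom_dihedralGroup_four_of_semidihedral hn ha hb hconj hgen hcard
  refine ⟨?_, ?_, ?_, ?_, ?_⟩
  · rw [hkey, mul_add, mul_one, add_right_comm, CharTwo.add_self_eq_zero, zero_add]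
  · have hne : of K G (a ^ 2 ^ (n - 1)) - 1 ≠ 0 :=
      sub_ne_zero.mpr fun h => hpow (of_injective (h.trans (map_one _).symm))
    rw [hkey, h1X, sub_pow_char_pow_of_commute 2 _ (Commute.one_right _), one_pow, ← map_pow]
    exact fun h => hne (((Group.isUnit b).map (of K G)).mul_left_eq_zero.mp h)
  · rw [hkey, h1X]
    exact Ideal.mul_mem_right _ _ (Ideal.pow_mem_pow (of_sub_one_mem_augIdeal _) _)
  · refine notMem_augIdeal_pow_four_of_dihedralFunctional_eq_one π ?_
    simp only [map_pow, map_add, mapDomainRingHom_of, hπa, hπb]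
    exact dihedralFunctional_sq
  · refine notMem_augIdeal_pow_four_of_dihedralFunctional_eq_one π ?_
    simp only [map_mul, map_add, map_one, mapDomainRingHom_of, hπa, hπb]
    exact dihedralFunctional_mul_one_add_mul
end
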